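/- arXiv:2310.11565 — 6 statements merged into one kernel-verified Lean document; each statement's English description precedes it below -/
import Mathlib

section
/- If a graph G on n vertices has a general position orthogonal representation in R^D, then G is (n-D)-connected. -/
/-!
If deleting fewer than `n - D` vertices disconnected `G`, the more than `D` remaining vertices
would split into nonempty parts `A`, `B` with no edges between them, so every vector of `A` is
orthogonal to every vector of `B`. Shrink `A` and `B` to subfamilies of at most `D` vectors each,
`D + 1` in total: general position makes each subfamily independent, and orthogonality then makes
their union an independent family of `D + 1` vectors in `ℝ^D`.
-/

open scoped RealInnerProductSpace

/-- A graph is `k`-connected: more than `k` vertices, and deleting any set of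
fewer than `k` vertices leaves a connected graph. -/
def IsKConnected {n : ℕ} (G : SimpleGraph (Fin n)) (k : ℕ) : Prop :=
  k < n ∧ ∀ S : Finset (Fin n), S.card < k →
    (G.induce ((↑S : Set (Fin n))ᶜ)).Connected

section GeneralPosition

variable {R M ι : Type*} [Semiring R] [AddCommMonoid M] [Module R M] [Fintype ι]

theorem linearIndependent_of_card_le_of_card_eq {v : ι → M} {D : ℕ}
    (hDι : D ≤ Fintype.card ι)
    (hGP : ∀ s : Finset ι, s.card = D → LinearIndependent R (fun i : s => v i))
    {s : Finset ι} (hs : s.card ≤ D) : LinearIndependent R (fun i : s => v i) := by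
  obtain ⟨t, hst, ht⟩ := Finset.exists_superset_card_eq hs hDι
  exact LinearIndepOn.mono (hGP t ht) (Finset.coe_subset.2 hst)

end GeneralPosition

section Orthogonal

variable {𝕜 E ι : Type*} [RCLike 𝕜] [NormedAddCommGroup E] [InnerProductSpace 𝕜 E]
  [FiniteDimensional 𝕜 E]

theorem card_add_card_le_finrank_of_inner_eq_zero {v : ι → E} {s t : Finset ι}
    (hs : LinearIndependent 𝕜 (fun i : s => v i)) (ht : LinearIndependent 𝕜 (fun i : t => v i))
    (horth : ∀ a ∈ s, ∀ b ∈ t, inner 𝕜 (v a) (v b) = 0) :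
    s.card + t.card ≤ Module.finrank 𝕜 E := by
  have hdisj : Disjoint (Submodule.span 𝕜 (Set.range fun a : s => v a))
      (Submodule.span 𝕜 (Set.range fun b : t => v b)) := by
    refine Submodule.IsOrtho.disjoint ((Submodule.isOrtho_span).2 ?_)
    rintro _ ⟨a, rfl⟩ _ ⟨b, rfl⟩
    exact horth a a.2 b b.2
  simpa using (hs.sum_type ht hdisj).fintype_card_le_finrank

variable [Fintype ι]

theorem card_add_card_le_finrank_of_generalPosition {v : ι → E}
    (hD : 0 < Module.finrank 𝕜 E) (hDι : Module.finrank 𝕜 E ≤ Fintype.card ι)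
    (hGP : ∀ s : Finset ι, s.card = Module.finrank 𝕜 E →
      LinearIndependent 𝕜 (fun i : s => v i))
    {A B : Finset ι} (hA : A.Nonempty) (hB : B.Nonempty)
    (horth : ∀ a ∈ A, ∀ b ∈ B, inner 𝕜 (v a) (v b) = 0) :
    A.card + B.card ≤ Module.finrank 𝕜 E := by
  set D := Module.finrank 𝕜 E
  by_contra! hAB
  have hA1 := hA.card_pos
  have hB1 := hB.card_pos
  obtain ⟨A', hA'A, hA'⟩ := Finset.exists_subset_card_eq (s := A) (n := min A.card D) (by omega)
  obtain ⟨B', hB'B, hB'⟩ :=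
    Finset.exists_subset_card_eq (s := B) (n := D + 1 - min A.card D) (by omega)
  have := card_add_card_le_finrank_of_inner_eq_zero
    (linearIndependent_of_card_le_of_card_eq hDι hGP (by omega : A'.card ≤ D))
    (linearIndependent_of_card_le_of_card_eq hDι hGP (by omega : B'.card ≤ D))
    (fun a ha b hb => horth a (hA'A ha) b (hB'B hb))
  omega

end Orthogonal

theorem SimpleGraph.exists_finset_forall_not_adj_of_not_preconnected {V : Type*} [Fintype V]
    [DecidableEq V] {H : SimpleGraph V} (h : ¬ H.Preconnected) :
    ∃ A : Finset V, A.Nonempty ∧ Aᶜ.Nonempty ∧ ∀ a ∈ A, ∀ b ∈ Aᶜ, ¬ H.Adj a b := by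
  classical
  obtain ⟨x, y, hxy⟩ : ∃ x y, ¬ H.Reachable x y := by
    simpa [SimpleGraph.Preconnected] using h
  refine ⟨Finset.univ.filter (H.Reachable x), ⟨x, by simp⟩, ⟨y, by simpa using hxy⟩, ?_⟩
  intro a ha b hb hab
  simp only [Finset.mem_compl, Finset.mem_filter, Finset.mem_univ, true_and] at ha hb
  exact hb (ha.trans hab.reachable)

theorem isKConnected_of_card_add_card_le {n k : ℕ} {G : SimpleGraph (Fin n)} (hk : k < n)
    (hsep : ∀ A B : Finset (Fin n), A.Nonempty → B.Nonempty → Disjoint A B →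
      (∀ a ∈ A, ∀ b ∈ B, ¬ G.Adj a b) → A.card + B.card ≤ n - k) :
    IsKConnected G k := by
  refine ⟨hk, fun S hS => ?_⟩
  have hcard : Fintype.card ↥((↑S : Set (Fin n))ᶜ) = n - S.card := by
    rw [Fintype.card_compl_set]; simp
  rw [SimpleGraph.connected_iff]
  refine ⟨?_, Fintype.card_pos_iff.1 (by omega)⟩
  by_contra hconn
  obtain ⟨A, hA, hAc, hnadj⟩ := SimpleGraph.exists_finset_forall_not_adj_of_not_preconnected hconn
  let incl := Function.Embedding.subtype (· ∈ ((↑S : Set (Fin n))ᶜ))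
  have := hsep (A.map incl) (Aᶜ.map incl) hA.map hAc.map
    ((Finset.disjoint_map incl).2 disjoint_compl_right) (by
      simp only [Finset.mem_map]
      rintro _ ⟨a, ha, rfl⟩ _ ⟨b, hb, rfl⟩
      exact hnadj a ha b hb)
  rw [Finset.card_map, Finset.card_map, Finset.card_add_card_compl, hcard] at this
  omega

/-- if `G` on `n` vertices has a general position orthogonal
representation in `ℝ^D`, then `G` is `(n-D)`-connected. -/
theorem stmt0 {n D : ℕ} (hD : 0 < D) (hDn : D ≤ n) (G : SimpleGraph (Fin n))
    (v : Fin n → EuclideanSpace ℝ (Fin D))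
    (hOR : ∀ i j : Fin n, i ≠ j → ¬ G.Adj i j → ⟪v i, v j⟫ = 0)
    (hGP : ∀ s : Finset (Fin n), s.card = D →
      LinearIndependent ℝ (fun i : s => v i)) :
    IsKConnected G (n - D) := by
  have hfin : Module.finrank ℝ (EuclideanSpace ℝ (Fin D)) = D := finrank_euclideanSpace_fin
  refine isKConnected_of_card_add_card_le (by omega) fun A B hA hB hAB hnadj => ?_
  rw [Nat.sub_sub_self hDn, ← hfin]
  refine card_add_card_le_finrank_of_generalPosition (by omega) (by simpa [hfin] using hDn)
    (fun s hs => hGP s (hs.trans hfin)) hA hB fun a ha b hb => hOR a b ?_ (hnadj a ha b hb)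
  rintro rfl
  exact Finset.disjoint_left.1 hAB ha hb
end

section
/- Let G be an (n-D)-connected graph on n vertices and let σ be an ordering of the vertices (a bijection [n] → [n]). If D ≤ i < n, then σ(i) and σ(i+1) are connected in G by a path all of whose vertices lie in {σ(1), ..., σ(i+1)}. -/
namespace SimpleGraph

theorem Preconnected.exists_walk_support_subset_of_induce {V : Type*} {G : SimpleGraph V}
    {s : Set V} (h : (G.induce s).Preconnected) {u v : V} (hu : u ∈ s) (hv : v ∈ s) :
    ∃ p : G.Walk u v, ∀ x ∈ p.support, x ∈ s := by
  obtain ⟨q⟩ := h ⟨u, hu⟩ ⟨v, hv⟩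
  refine ⟨q.map (Embedding.induce s).toHom, fun x hx => ?_⟩
  obtain ⟨y, -, rfl⟩ := List.mem_map.1 (Walk.support_map _ q ▸ hx)
  exact y.2

end SimpleGraph

namespace Equiv.Perm

theorem notMem_map_Ioi_iff {n : ℕ} (σ : Equiv.Perm (Fin n)) (m x : Fin n) :
    x ∉ (Finset.Ioi m).map σ.toEmbedding ↔ σ.symm x ≤ m := by
  simp [Finset.mem_map_equiv]

theorem card_map_Ioi {n : ℕ} (σ : Equiv.Perm (Fin n)) (m : Fin n) :
    ((Finset.Ioi m).map σ.toEmbedding).card = n - 1 - m := by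
  rw [Finset.card_map, Fin.card_Ioi]

end Equiv.Perm

-- Positions are 0-indexed: `σ ⟨k, _⟩` and `σ ⟨k + 1, _⟩` are the informal `σ(i)`, `σ(i+1)`
-- with `i = k + 1`.
/-- in an `(n-D)`-connected graph, consecutive vertices
`σ(i), σ(i+1)` of an ordering (with `D ≤ i`, 1-indexed; here the two vertices
are at 0-indexed positions `i-1` and `i`, written `k` and `k+1` with
`D ≤ k+1`) are joined by a path using only vertices among the first `i+1`
vertices of the ordering. -/
theorem stmt3 {n D : ℕ} (G : SimpleGraph (Fin n))
    (hcon : IsKConnected G (n - D)) (σ : Equiv.Perm (Fin n))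
    (k : ℕ) (hk : k + 1 < n) (hD : D ≤ k + 1) :
    ∃ p : G.Walk (σ ⟨k, by omega⟩) (σ ⟨k + 1, hk⟩),
      ∀ x ∈ p.support, ∃ j : Fin n, j.val ≤ k + 1 ∧ σ j = x := by
  set m : Fin n := ⟨k + 1, hk⟩
  set S := (Finset.Ioi m).map σ.toEmbedding
  have hS : S.card < n - D := by
    rw [σ.card_map_Ioi m, Fin.val_mk]
    omega
  have hmem (j : Fin n) (hj : j ≤ m) : σ j ∈ (↑S : Set (Fin n))ᶜ :=
    (σ.notMem_map_Ioi_iff m _).2 (by simpa using hj)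
  obtain ⟨p, hp⟩ := (hcon.2 S hS).preconnected.exists_walk_support_subset_of_induce
    (hmem ⟨k, by omega⟩ (Fin.mk_le_mk.2 k.le_succ)) (hmem m le_rfl)
  exact ⟨p, fun x hx => ⟨σ.symm x, (σ.notMem_map_Ioi_iff m x).1 (hp x hx), σ.apply_symm_apply x⟩⟩
end

section
/- Let φ : R^N → R^M be a polynomial map, let S = φ(R^N), and let U be a nonempty subset of S whose complement in S is contained in the zero set of a polynomial f that does not vanish identically on S. Then U is dense in S in the Euclidean topology. -/
/-!
A nonempty open subset of `ℝ^N` contains a box with infinite sides, and a polynomial vanishing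
on such a box is zero. So the pullback `f ∘ φ` of `f`, which is a nonzero polynomial on
`ℝ^N`, is nonzero on a dense subset of `ℝ^N`. Its image under the continuous map `φ` lies in `U`
and is dense in `S = φ(ℝ^N)`.
-/

open MvPolynomial Filter Topology

namespace MvPolynomial

theorem eval_bind₁ {σ τ R : Type*} [CommSemiring R] (x : τ → R) (φ : σ → MvPolynomial τ R)
    (f : MvPolynomial σ R) : eval x (bind₁ φ f) = eval (fun i => eval x (φ i)) f :=
  aeval_bind₁ x φ f

theorem eq_zero_of_eqOn_zero_of_isOpen {σ R : Type*} [Finite σ] [CommRing R] [IsDomain R]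
    [TopologicalSpace R] [T1Space R] [∀ r : R, NeBot (𝓝[≠] r)] {p : MvPolynomial σ R}
    {V : Set (σ → R)} (hV : IsOpen V) (hVne : V.Nonempty) (hp : ∀ x ∈ V, eval x p = 0) :
    p = 0 := by
  obtain ⟨x, hx⟩ := hVne
  obtain ⟨u, hu, hbox⟩ := isOpen_pi_iff'.mp hV x hx
  exact funext_set u (fun i => infinite_of_mem_nhds (x i) ((hu i).1.mem_nhds (hu i).2))
    fun y hy => by simpa using hp y (hbox hy)

theorem dense_setOf_eval_ne_zero {σ R : Type*} [Finite σ] [CommRing R] [IsDomain R]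
    [TopologicalSpace R] [T1Space R] [∀ r : R, NeBot (𝓝[≠] r)] {p : MvPolynomial σ R}
    (hp : p ≠ 0) : Dense {x : σ → R | eval x p ≠ 0} := by
  refine dense_iff_inter_open.mpr fun V hV hVne => ?_
  by_contra hdisj
  refine hp (eq_zero_of_eqOn_zero_of_isOpen hV hVne fun x hx => ?_)
  by_contra hne
  exact hdisj ⟨x, hx, hne⟩

end MvPolynomial

theorem stmt7_general {N M : ℕ} (φ : Fin M → MvPolynomial (Fin N) ℝ)
    (S : Set (Fin M → ℝ))
    (hS : S = Set.range (fun x : Fin N → ℝ => fun m : Fin M => eval x (φ m)))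
    (U : Set (Fin M → ℝ))
    (f : MvPolynomial (Fin M) ℝ)
    (hcompl : S \ U ⊆ {y | eval y f = 0})
    (hfS : ∃ y ∈ S, eval y f ≠ 0) :
    S ⊆ closure U := by
  set ψ : (Fin N → ℝ) → (Fin M → ℝ) := fun x m => eval x (φ m)
  have hψ : Continuous ψ := continuous_pi fun m => continuous_eval (φ m)
  have hpullback : ∀ x, eval x (bind₁ φ f) = eval (ψ x) f := fun x => eval_bind₁ x φ f
  have hne_zero : bind₁ φ f ≠ 0 := by
    obtain ⟨_, ⟨x, rfl⟩, hx⟩ := hS ▸ hfS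
    intro h
    exact hx (by rw [← hpullback, h, map_zero])
  have hmaps : ψ '' {x | eval x (bind₁ φ f) ≠ 0} ⊆ U := by
    rintro _ ⟨x, hx, rfl⟩
    by_contra hxU
    exact hx ((hpullback x).trans (hcompl ⟨hS ▸ ⟨x, rfl⟩, hxU⟩))
  calc S = Set.range ψ := hS
    _ ⊆ closure (ψ '' {x | eval x (bind₁ φ f) ≠ 0}) :=
      hψ.range_subset_closure_image_dense (dense_setOf_eval_ne_zero hne_zero)
    _ ⊆ closure U := closure_mono hmaps

/-- let `φ : ℝ^N → ℝ^M` be a polynomial map, `S = φ(ℝ^N)`, and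
`U ⊆ S` nonempty with `S \ U` contained in the zero set of a polynomial `f`
that does not vanish identically on `S`.  Then `U` is dense in `S`. -/
theorem stmt7 {N M : ℕ} (φ : Fin M → MvPolynomial (Fin N) ℝ)
    (S : Set (Fin M → ℝ))
    (hS : S = Set.range (fun x : Fin N → ℝ => fun m : Fin M => eval x (φ m)))
    (U : Set (Fin M → ℝ)) (hUS : U ⊆ S) (hUne : U.Nonempty)
    (f : MvPolynomial (Fin M) ℝ)
    (hcompl : S \ U ⊆ {y | eval y f = 0})
    (hfS : ∃ y ∈ S, eval y f ≠ 0) :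
    S ⊆ closure U :=
  stmt7_general φ S hS U f hcompl hfS
end

section
/- Define two subsets A, B of a topological space X to be 'almost the same' (ATS) if A ∩ B is dense in A and dense in B. If A, B, C ⊆ R^D are semi-algebraic sets such that A and B are ATS, and B and C are ATS, then A and C are ATS. -/
/-- A semi-algebraic subset of `ℝ^D`: a finite union of finite intersections
of sets cut out by a polynomial equality and a strict polynomial inequality. -/
def IsSemialgebraic {D : ℕ} (s : Set (Fin D → ℝ)) : Prop :=
  ∃ (m k : ℕ) (p q : Fin m → Fin k → MvPolynomial (Fin D) ℝ),
    s = ⋃ i, ⋂ j, {x | MvPolynomial.eval x (p i j) = 0 ∧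
        0 < MvPolynomial.eval x (q i j)}

/-- Two subsets of a topological space are "almost the same" (ATS) if their
intersection is dense in each of them. -/
def ATS {X : Type*} [TopologicalSpace X] (A B : Set X) : Prop :=
  A ⊆ closure (A ∩ B) ∧ B ⊆ closure (A ∩ B)

/-!
Sets that are ATS have the same closure, so transitivity amounts to: if `closure S = closure T`
and `T` is semi-algebraic, then `S ∩ T` is dense in `S`. A semi-algebraic `T` is a finite union
of locally closed sets, and therefore every open set meeting `closure T` contains a smaller open
set `V` meeting `T` on which `closure T` and `T` agree. Points of `S` are approximated by points
of `closure T = closure S`, hence of `T` inside such a `V`, and those in turn by points of `S`,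
which lie in `V ∩ closure T ⊆ T`.
-/

open Set

section GenericallyLocallyClosed

variable {X : Type*} [TopologicalSpace X]

def IsGenericallyLocallyClosed (T : Set X) : Prop :=
  ∀ U, IsOpen U → (U ∩ closure T).Nonempty →
    ∃ V ⊆ U, IsOpen V ∧ (V ∩ T).Nonempty ∧ V ∩ closure T ⊆ T

theorem IsLocallyClosed.isGenericallyLocallyClosed {L : Set X} (hL : IsLocallyClosed L) :
    IsGenericallyLocallyClosed L := by
  obtain ⟨O, Z, hO, hZ, rfl⟩ := hL
  intro U hU hne
  obtain ⟨x, hxO, hxU⟩ := (closure_inter_open_nonempty_iff hU).1 (inter_comm _ _ ▸ hne)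
  refine ⟨U ∩ O, inter_subset_left, hU.inter hO, ⟨x, ⟨hxU, hxO.1⟩, hxO⟩, ?_⟩
  rintro y ⟨⟨-, hyO⟩, hy⟩
  exact ⟨hyO, closure_minimal inter_subset_right hZ hy⟩

theorem isGenericallyLocallyClosed_empty : IsGenericallyLocallyClosed (∅ : Set X) := by
  intro U _ hne
  simp at hne

theorem IsGenericallyLocallyClosed.union {T₁ T₂ : Set X} (h₁ : IsGenericallyLocallyClosed T₁)
    (h₂ : IsGenericallyLocallyClosed T₂) : IsGenericallyLocallyClosed (T₁ ∪ T₂) := by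
  intro U hU hne
  rw [closure_union] at hne ⊢
  by_cases hout : ((U \ closure T₁) ∩ closure T₂).Nonempty
  · obtain ⟨V, hVU, hV, hVT, hVcl⟩ := h₂ _ (hU.sdiff isClosed_closure) hout
    refine ⟨V, hVU.trans sdiff_subset, hV, hVT.mono (inter_subset_inter_right _ subset_union_right),
      fun y ⟨hyV, hy⟩ => ?_⟩
    have hy₁ : y ∉ closure T₁ := (hVU hyV).2
    exact Or.inr (hVcl ⟨hyV, hy.resolve_left hy₁⟩)
  · have hin : U ∩ closure T₂ ⊆ closure T₁ := fun y hy => by_contra fun hy₁ =>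
      hout ⟨y, ⟨hy.1, hy₁⟩, hy.2⟩
    have hne₁ : (U ∩ closure T₁).Nonempty := by
      obtain ⟨x, hxU, hx⟩ := hne
      exact ⟨x, hxU, hx.elim id fun hx₂ => hin ⟨hxU, hx₂⟩⟩
    obtain ⟨V, hVU, hV, hVT, hVcl⟩ := h₁ U hU hne₁
    refine ⟨V, hVU, hV, hVT.mono (inter_subset_inter_right _ subset_union_left),
      fun y ⟨hyV, hy⟩ => Or.inl (hVcl ⟨hyV, ?_⟩)⟩
    exact hy.elim id fun hy₂ => hin ⟨hVU hyV, hy₂⟩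

theorem IsGenericallyLocallyClosed.biUnion_finset {ι : Type*} {f : ι → Set X} (s : Finset ι)
    (hf : ∀ i ∈ s, IsGenericallyLocallyClosed (f i)) :
    IsGenericallyLocallyClosed (⋃ i ∈ s, f i) := by
  classical
  induction s using Finset.induction_on with
  | empty => simpa using isGenericallyLocallyClosed_empty
  | insert a s _ ih =>
    rw [Finset.set_biUnion_insert]
    exact (hf a (Finset.mem_insert_self a s)).union
      (ih fun i hi => hf i (Finset.mem_insert_of_mem hi))

theorem IsGenericallyLocallyClosed.iUnion {ι : Type*} [Finite ι] {f : ι → Set X}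
    (hf : ∀ i, IsGenericallyLocallyClosed (f i)) :
    IsGenericallyLocallyClosed (⋃ i, f i) := by
  cases nonempty_fintype ι
  simpa using IsGenericallyLocallyClosed.biUnion_finset Finset.univ fun i _ => hf i

theorem IsGenericallyLocallyClosed.subset_closure_inter {S T : Set X}
    (hT : IsGenericallyLocallyClosed T) (h : closure S = closure T) :
    S ⊆ closure (S ∩ T) := by
  intro x hx
  rw [mem_closure_iff]
  intro U hU hxU
  have hxT : x ∈ closure T := h ▸ subset_closure hx
  obtain ⟨V, hVU, hV, ⟨z, hzV, hzT⟩, hVcl⟩ := hT U hU ⟨x, hxU, hxT⟩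
  have hzS : z ∈ closure S := h ▸ subset_closure hzT
  obtain ⟨s, hsV, hsS⟩ := mem_closure_iff.1 hzS V hV hzV
  exact ⟨s, hVU hsV, hsS, hVcl ⟨hsV, h ▸ subset_closure hsS⟩⟩

end GenericallyLocallyClosed

theorem IsSemialgebraic.isGenericallyLocallyClosed {D : ℕ} {s : Set (Fin D → ℝ)}
    (hs : IsSemialgebraic s) : IsGenericallyLocallyClosed s := by
  obtain ⟨m, k, p, q, rfl⟩ := hs
  refine IsGenericallyLocallyClosed.iUnion fun i => IsLocallyClosed.isGenericallyLocallyClosed ?_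
  refine ⟨⋂ j, {x | 0 < MvPolynomial.eval x (q i j)}, ⋂ j, {x | MvPolynomial.eval x (p i j) = 0},
    isOpen_iInter_of_finite fun j => isOpen_lt continuous_const (MvPolynomial.continuous_eval _),
    isClosed_iInter fun j => isClosed_eq (MvPolynomial.continuous_eval _) continuous_const, ?_⟩
  ext x
  simp only [mem_iInter, mem_inter_iff, mem_ofPred_eq, forall_and]
  exact and_comm

namespace ATS

variable {X : Type*} [TopologicalSpace X] {A B : Set X}

theorem closure_eq (h : ATS A B) : closure A = closure B := by
  have hA : closure A = closure (A ∩ B) :=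
    (closure_minimal h.1 isClosed_closure).antisymm (closure_mono inter_subset_left)
  have hB : closure B = closure (A ∩ B) :=
    (closure_minimal h.2 isClosed_closure).antisymm (closure_mono inter_subset_right)
  rw [hA, hB]

theorem of_closure_eq (hA : IsGenericallyLocallyClosed A) (hB : IsGenericallyLocallyClosed B)
    (h : closure A = closure B) : ATS A B :=
  ⟨hB.subset_closure_inter h, inter_comm A B ▸ hA.subset_closure_inter h.symm⟩

end ATS

theorem stmt8_general {D : ℕ} (A B C : Set (Fin D → ℝ))
    (hA : IsSemialgebraic A) (hC : IsSemialgebraic C)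
    (hAB : ATS A B) (hBC : ATS B C) : ATS A C :=
  ATS.of_closure_eq hA.isGenericallyLocallyClosed hC.isGenericallyLocallyClosed
    (hAB.closure_eq.trans hBC.closure_eq)

/-- ATS is transitive on semi-algebraic subsets of `ℝ^D`. -/
theorem stmt8 {D : ℕ} (A B C : Set (Fin D → ℝ))
    (hA : IsSemialgebraic A) (hB : IsSemialgebraic B) (hC : IsSemialgebraic C)
    (hAB : ATS A B) (hBC : ATS B C) : ATS A C :=
  stmt8_general A B C hA hC hAB hBC
end

section
/- Let A and B be semi-algebraic subsets of R^D with A dense in B. Then there exists a subset U ⊆ A that is open in B and dense in B. -/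
open Set Topology

section LocallyClosed

variable {X : Type*} [TopologicalSpace X]

lemma IsLocallyClosed.dense_compl_frontier {s : Set X} (hs : IsLocallyClosed s) :
    Dense (frontier s)ᶜ := by
  obtain ⟨U, Z, hU, hZ, rfl⟩ := hs
  have hU' : Dense (frontier U)ᶜ := by
    rw [← frontier_compl, ← interior_eq_empty_iff_dense_compl]
    exact interior_frontier hU.isClosed_compl
  have hZ' : Dense (frontier Z)ᶜ :=
    interior_eq_empty_iff_dense_compl.mp (interior_frontier hZ)
  refine Dense.mono ?_ (hU'.inter_of_isOpen_left hZ' isClosed_frontier.isOpen_compl)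
  rw [← compl_union, compl_subset_compl]
  exact (frontier_inter_subset U Z).trans
    (union_subset_union inter_subset_left inter_subset_right)

theorem dense_interior_iUnion_of_isLocallyClosed {ι : Type*} [Finite ι] {L : ι → Set X}
    (hL : ∀ i, IsLocallyClosed (L i)) (hdense : Dense (⋃ i, L i)) :
    Dense (interior (⋃ i, L i)) := by
  set N := ⋂ i, (frontier (L i))ᶜ
  have hN_open : IsOpen N := isOpen_iInter_of_finite fun i => isClosed_frontier.isOpen_compl
  have hN_dense : Dense N := by
    rw [show N = ⋂₀ range fun i => (frontier (L i))ᶜ from (sInter_range _).symm]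
    exact (finite_range _).dense_sInter
      (forall_mem_range.2 fun i => isClosed_frontier.isOpen_compl)
      (forall_mem_range.2 fun i => (hL i).dense_compl_frontier)
  refine (hdense.inter_of_isOpen_right hN_dense hN_open).mono ?_
  rintro x ⟨hx, hxN⟩
  obtain ⟨i, hxi⟩ := mem_iUnion.1 hx
  have hx_int : x ∈ interior (L i) := by
    by_contra h
    exact mem_iInter.1 hxN i ⟨subset_closure hxi, h⟩
  exact interior_mono (subset_iUnion L i) hx_int

end LocallyClosed

lemma IsSemialgebraic.exists_eq_iUnion_isLocallyClosed {D : ℕ} {s : Set (Fin D → ℝ)}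
    (hs : IsSemialgebraic s) :
    ∃ (m : ℕ) (L : Fin m → Set (Fin D → ℝ)), (∀ i, IsLocallyClosed (L i)) ∧ s = ⋃ i, L i := by
  obtain ⟨m, k, p, q, rfl⟩ := hs
  refine ⟨m, _, fun i => ?_, rfl⟩
  have hpiece : (⋂ j, {x : Fin D → ℝ | MvPolynomial.eval x (p i j) = 0 ∧
      0 < MvPolynomial.eval x (q i j)}) =
      (⋂ j, {x | 0 < MvPolynomial.eval x (q i j)}) ∩
        ⋂ j, {x | MvPolynomial.eval x (p i j) = 0} := by
    ext x
    simp only [mem_iInter, mem_inter_iff, mem_ofPred_eq, forall_and, and_comm]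
  rw [hpiece]
  exact ⟨_, _, isOpen_iInter_of_finite fun j =>
      isOpen_lt continuous_const (MvPolynomial.continuous_eval _),
    isClosed_iInter fun j => isClosed_eq (MvPolynomial.continuous_eval _) continuous_const, rfl⟩

theorem stmt9_general {D : ℕ} (A B : Set (Fin D → ℝ))
    (hA : IsSemialgebraic A)
    (hAB : A ⊆ B) (hdense : B ⊆ closure A) :
    ∃ U : Set (Fin D → ℝ), U ⊆ A ∧
      (∃ V : Set (Fin D → ℝ), IsOpen V ∧ U = V ∩ B) ∧
      B ⊆ closure U := by
  obtain ⟨m, L, hL, rfl⟩ := hA.exists_eq_iUnion_isLocallyClosed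
  set S : Set B := (↑) ⁻¹' ⋃ i, L i
  have hS_eq : S = ⋃ i, (↑) ⁻¹' L i := preimage_iUnion
  have hS_dense : Dense S := by
    rwa [Subtype.dense_iff, Subtype.image_preimage_coe, inter_eq_right.2 hAB]
  have hU_dense : Dense (interior S) := by
    rw [hS_eq] at hS_dense ⊢
    exact dense_interior_iUnion_of_isLocallyClosed
      (fun i => (hL i).preimage continuous_subtype_val) hS_dense
  obtain ⟨V, hV, hV_eq⟩ := isOpen_induced_iff.1 (isOpen_interior (s := S))
  refine ⟨(↑) '' interior S, ?_, ⟨V, hV, ?_⟩, Subtype.dense_iff.1 hU_dense⟩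
  · exact (image_mono interior_subset).trans (image_preimage_subset _ _)
  · rw [← hV_eq, Subtype.image_preimage_coe, inter_comm]

/-- if `A ⊆ B` are semi-algebraic with `A` dense in `B`, then
there is a subset `U ⊆ A` that is open in the subspace topology on `B` and
dense in `B`. -/
theorem stmt9 {D : ℕ} (A B : Set (Fin D → ℝ))
    (hA : IsSemialgebraic A) (hB : IsSemialgebraic B)
    (hAB : A ⊆ B) (hdense : B ⊆ closure A) :
    ∃ U : Set (Fin D → ℝ), U ⊆ A ∧
      (∃ V : Set (Fin D → ℝ), IsOpen V ∧ U = V ∩ B) ∧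
      B ⊆ closure U :=
  stmt9_general A B hA hAB hdense
end

section
/- Let G be a graph on [n] and σ, τ orderings of [n] that agree except for swapping positions i and i+1, where {σ(i), σ(i+1)} is an edge of G. Then the set of orthogonal representations obtainable by the sequential construction using σ equals the set obtainable using τ. -/
/-!
Membership of `v` in `GOR⁺_σ` only depends, for each vertex `a`, on the set of non-neighbours of
`a` that come before `a` in `σ`. Swapping two consecutive positions changes the relative order of
exactly one pair of vertices, `σ(i)` and `σ(i+1)`; since they are adjacent, neither is a
non-neighbour of the other, so none of these sets changes.
-/

open scoped Classical

/-- The set `GOR⁺_σ` of outputs of the sequential construction: at each step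
`i`, the vector at `σ i` lies in the orthogonal complement of the span of the
vectors at the preceding non-neighbors of `σ i` if those vectors are linearly
independent, and is the zero vector otherwise. -/
def GORplus {n D : ℕ} (G : SimpleGraph (Fin n)) (σ : Equiv.Perm (Fin n)) :
    Set (Fin n → EuclideanSpace ℝ (Fin D)) :=
  {v | ∀ i : Fin n,
    (LinearIndependent ℝ
        (fun j : {j : Fin n // j < i ∧ ¬ G.Adj (σ j) (σ i)} => v (σ j)) ∧
      v (σ i) ∈ (Submodule.span ℝ
        (v ∘ σ '' {j : Fin n | j < i ∧ ¬ G.Adj (σ j) (σ i)}))ᗮ) ∨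
    (¬ LinearIndependent ℝ
        (fun j : {j : Fin n // j < i ∧ ¬ G.Adj (σ j) (σ i)} => v (σ j)) ∧
      v (σ i) = 0)}

theorem Equiv.swap_lt_swap_iff_of_covBy {α : Type*} [LinearOrder α] [DecidableEq α] {i j p q : α}
    (hij : i ⋖ j) (h₁ : ¬(p = i ∧ q = j)) (h₂ : ¬(p = j ∧ q = i)) :
    swap i j p < swap i j q ↔ p < q := by
  have below : ∀ c, c ≠ i → (c < j ↔ c < i) := fun c hc =>
    ⟨fun h => (hij.le_of_lt h).lt_of_ne hc, fun h => h.trans hij.lt⟩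
  have above : ∀ c, c ≠ j → (i < c ↔ j < c) := fun c hc =>
    ⟨fun h => (hij.ge_of_gt h).lt_of_ne' hc, fun h => hij.lt.trans h⟩
  have hlt := hij.lt
  simp only [swap_apply_def]
  split_ifs <;> grind

namespace SimpleGraph

variable {α : Type*} [LinearOrder α] (G : SimpleGraph α)

def earlierNonNeighbors (σ : Equiv.Perm α) (a : α) : Set α :=
  {x | σ.symm x < σ.symm a ∧ ¬ G.Adj x a}

theorem earlierNonNeighbors_mul_swap [DecidableEq α] {σ : Equiv.Perm α} {i j : α} (hij : i ⋖ j)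
    (hadj : G.Adj (σ i) (σ j)) (a : α) :
    G.earlierNonNeighbors (σ * Equiv.swap i j) a = G.earlierNonNeighbors σ a := by
  ext x
  simp only [earlierNonNeighbors, Set.mem_ofPred_eq, Equiv.Perm.mul_def, Equiv.symm_trans,
    Equiv.trans_apply, Equiv.symm_swap]
  refine and_congr_left fun hxa => Equiv.swap_lt_swap_iff_of_covBy hij ?_ ?_
  · rintro ⟨rfl, rfl⟩
    exact hxa (by simpa using hadj)
  · rintro ⟨rfl, rfl⟩
    exact hxa (by simpa using hadj.symm)

end SimpleGraph

def IsSequentialStep {ι E : Type*} [NormedAddCommGroup E] [InnerProductSpace ℝ E]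
    (v : ι → E) (a : ι) (S : Set ι) : Prop :=
  (LinearIndependent ℝ (fun x : S => v x) ∧ v a ∈ (Submodule.span ℝ (v '' S))ᗮ) ∨
    (¬ LinearIndependent ℝ (fun x : S => v x) ∧ v a = 0)

theorem mem_GORplus_iff {n D : ℕ} (G : SimpleGraph (Fin n)) (σ : Equiv.Perm (Fin n))
    (v : Fin n → EuclideanSpace ℝ (Fin D)) :
    v ∈ GORplus G σ ↔ ∀ a, IsSequentialStep v a (G.earlierNonNeighbors σ a) := by
  rw [← σ.forall_congr_right]
  refine forall_congr' fun k => ?_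
  have hset : σ '' {j | j < k ∧ ¬ G.Adj (σ j) (σ k)} = G.earlierNonNeighbors σ (σ k) := by
    rw [σ.image_eq_preimage_symm]
    ext x
    simp [SimpleGraph.earlierNonNeighbors]
  have hli : LinearIndependent ℝ (fun j : {j // j < k ∧ ¬ G.Adj (σ j) (σ k)} => v (σ j)) ↔
      LinearIndependent ℝ (fun x : G.earlierNonNeighbors σ (σ k) => v x) := by
    exact linearIndependent_equiv (R := ℝ) (f := fun x : G.earlierNonNeighbors σ (σ k) => v x)
      (σ.subtypeEquiv fun j => by simp [SimpleGraph.earlierNonNeighbors])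
  simp only [IsSequentialStep, Set.image_comp, hset]
  rw [hli]

/-- if the orderings `σ` and `τ` differ only by swapping the
adjacent positions `i` and `i+1`, and the vertices `σ(i)`, `σ(i+1)` are
adjacent in `G`, then the sequential construction produces the same set of
orthogonal representations for both orderings. -/
theorem stmt18 {n D : ℕ} (G : SimpleGraph (Fin n))
    (σ τ : Equiv.Perm (Fin n)) (i : Fin n) (hi : i.val + 1 < n)
    (hswap1 : σ i = τ ⟨i.val + 1, hi⟩) (hswap2 : σ ⟨i.val + 1, hi⟩ = τ i)
    (hagree : ∀ j : Fin n, j ≠ i → j ≠ ⟨i.val + 1, hi⟩ → σ j = τ j)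
    (hadj : G.Adj (σ i) (σ ⟨i.val + 1, hi⟩)) :
    (GORplus G σ : Set (Fin n → EuclideanSpace ℝ (Fin D))) = GORplus G τ := by
  set j : Fin n := ⟨i.val + 1, hi⟩
  have hij : i ⋖ j := Fin.covBy_iff.mpr (Nat.covBy_iff_add_one_eq.mpr rfl)
  have hσ : σ = τ * Equiv.swap i j := by
    ext k
    rw [Equiv.Perm.mul_apply, Equiv.swap_apply_def]
    split_ifs with hki hkj
    · rw [hki, hswap1]
    · rw [hkj, hswap2]
    · rw [hagree k hki hkj]
  have hτadj : G.Adj (τ i) (τ j) := by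
    rw [hswap1, hswap2] at hadj
    exact hadj.symm
  ext v
  simp only [mem_GORplus_iff, hσ, G.earlierNonNeighbors_mul_swap hij hτadj]
end
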